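/- arXiv:2503.07028 — 2 statements merged into one kernel-verified Lean document; each statement's English description precedes it below -/
import Mathlib

section
/- (Stability / continuous dependence on initial data, Theorem 5.2.) Under the model hypotheses, let U and V be solutions of the integral invariant model with initial data Ũ₀ and Ṽ₀ respectively, where Ũ₀, Ṽ₀ ∈ L²(ℝ^d) vanish almost everywhere outside Ω̃(0). Then for every t ∈ [0,T], ‖U(·,t) − V(·,t)‖_{L²(Ω̃(t))} ≤ e^{M_A T/2}·‖Ũ₀ − Ṽ₀‖_{L²(Ω̃(0))}; in particular the fluctuation of solutions induced by an initial perturbation is uniformly bounded in L² over all times. -/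
/-!
Test the weak formulations of `U` and `V` against `Ψ = 1_Ω · (U - V)(D_{T→t} ·, t)`. Since
`Ψ ∘ D_{t→T} = U(·,t) - V(·,t)` on `Ω̃(t)`, subtracting them gives
`‖U(·,t) - V(·,t)‖² = ∫_{Ω̃(0)} (Ũ₀ - Ṽ₀) · Ψ ∘ D_{0→T} ≤ ‖Ũ₀ - Ṽ₀‖ · ‖Ψ ∘ D_{0→T}‖`.
By Grönwall's inequality, applied forward and backward in time, every composite flow map
`D_{T→σ} ∘ D_{τ→T}` is `e^{L_A T}`-Lipschitz, and a `K`-Lipschitz map of `ℝ^d` enlarges Lebesgue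
measure by at most `K^d`. Changing variables along the inverse of such a map bounds
`‖Ψ ∘ D_{0→T}‖` by `e^{d L_A T / 2} ‖U(·,t) - V(·,t)‖`, and dividing gives the estimate.
-/

open MeasureTheory

/-- `U` is a solution of the integral invariant model on `[0,T]` with moving domain
`Ω̃(t) = D^A_{T→t}(Ω)` and initial datum `U₀`. -/
def IsSolutionIIM (d : ℕ) (T : ℝ)
    (D : ℝ → ℝ → EuclideanSpace ℝ (Fin d) → EuclideanSpace ℝ (Fin d))
    (Ω : Set (EuclideanSpace ℝ (Fin d)))
    (U₀ : EuclideanSpace ℝ (Fin d) → ℝ)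
    (U : EuclideanSpace ℝ (Fin d) → ℝ → ℝ) : Prop :=
  (∀ t ∈ Set.Icc (0:ℝ) T,
      MemLp (fun x => U x t) 2 (volume.restrict (D T t '' Ω))) ∧
  (∀ᵐ x ∂(volume.restrict (D T 0 '' Ω)), U x 0 = U₀ x) ∧
  (∀ Ψ : EuclideanSpace ℝ (Fin d) → ℝ, MemLp Ψ 2 volume →
    (∀ᵐ x ∂(volume : Measure (EuclideanSpace ℝ (Fin d))), x ∉ Ω → Ψ x = 0) →
    ∀ t ∈ Set.Icc (0:ℝ) T,
      ∫ x in D T t '' Ω, U x t * Ψ (D t T x)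
        = ∫ x in D T 0 '' Ω, U₀ x * Ψ (D 0 T x))

open Set Function Module
open scoped NNReal ENNReal

section Gronwall

variable {E : Type*} [NormedAddCommGroup E] [NormedSpace ℝ E] {v : ℝ → E → E} {K : ℝ≥0}
  {f g : ℝ → E} {a b σ τ : ℝ}

theorem HasDerivWithinAt.comp_const_sub {f : ℝ → E} {f' : E} {s t : Set ℝ} (c x : ℝ)
    (hf : HasDerivWithinAt f f' t (c - x)) (hst : MapsTo (c - ·) s t) :
    HasDerivWithinAt (fun y => f (c - y)) (-f') s x := by
  simpa [Function.comp_def] using hf.scomp x ((hasDerivWithinAt_id x s).const_sub c) hst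

theorem dist_le_of_trajectories_ODE_Icc_of_le
    (hv : ∀ r ∈ Icc a b, LipschitzWith K (v r))
    (hf : ∀ r ∈ Icc a b, HasDerivWithinAt f (v r (f r)) (Icc a b) r)
    (hg : ∀ r ∈ Icc a b, HasDerivWithinAt g (v r (g r)) (Icc a b) r)
    (hσ : σ ∈ Icc a b) (hτ : τ ∈ Icc a b) (hτσ : τ ≤ σ) :
    dist (f σ) (g σ) ≤ dist (f τ) (g τ) * Real.exp (K * (σ - τ)) := by
  have hsub : Icc τ σ ⊆ Icc a b := Icc_subset_Icc hτ.1 hσ.2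
  have hcont : ∀ h : ℝ → E, (∀ r ∈ Icc a b, HasDerivWithinAt h (v r (h r)) (Icc a b) r) →
      ContinuousOn h (Icc τ σ) := fun h hh r hr =>
    (hh r (hsub hr)).continuousWithinAt.mono hsub
  have hderiv : ∀ h : ℝ → E, (∀ r ∈ Icc a b, HasDerivWithinAt h (v r (h r)) (Icc a b) r) →
      ∀ r ∈ Ico τ σ, HasDerivWithinAt h (v r (h r)) (Ici r) r := fun h hh r hr =>
    (hh r (hsub (Ico_subset_Icc_self hr))).mono_of_mem_nhdsWithin
      (Icc_mem_nhdsGE_of_mem ⟨hτ.1.trans hr.1, hr.2.trans_le hσ.2⟩)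
  exact dist_le_of_trajectories_ODE_of_mem (s := fun _ => univ)
    (fun r hr => (hv r (hsub (Ico_subset_Icc_self hr))).lipschitzOnWith)
    (hcont f hf) (hderiv f hf) (fun _ _ => trivial) (hcont g hg) (hderiv g hg)
    (fun _ _ => trivial) le_rfl σ ⟨hτσ, le_rfl⟩

theorem dist_le_of_trajectories_ODE_Icc
    (hv : ∀ r ∈ Icc a b, LipschitzWith K (v r))
    (hf : ∀ r ∈ Icc a b, HasDerivWithinAt f (v r (f r)) (Icc a b) r)
    (hg : ∀ r ∈ Icc a b, HasDerivWithinAt g (v r (g r)) (Icc a b) r)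
    (hσ : σ ∈ Icc a b) (hτ : τ ∈ Icc a b) :
    dist (f σ) (g σ) ≤ dist (f τ) (g τ) * Real.exp (K * (b - a)) := by
  have hexp : ∀ r ≤ b - a, Real.exp (K * r) ≤ Real.exp (K * (b - a)) := fun r hr => by
    gcongr
  rcases le_total τ σ with hτσ | hστ
  · exact (dist_le_of_trajectories_ODE_Icc_of_le hv hf hg hσ hτ hτσ).trans
      (mul_le_mul_of_nonneg_left (hexp _ (by linarith [hσ.2, hτ.1])) dist_nonneg)
  -- Backward in time, apply the forward estimate to the time-reversed field `-v (a + b - ·)`.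
  have hrefl : MapsTo (a + b - ·) (Icc a b) (Icc a b) := fun r hr =>
    ⟨by linarith [hr.2], by linarith [hr.1]⟩
  have hrev : ∀ h : ℝ → E, (∀ r ∈ Icc a b, HasDerivWithinAt h (v r (h r)) (Icc a b) r) →
      ∀ r ∈ Icc a b, HasDerivWithinAt (fun y => h (a + b - y))
        (-v (a + b - r) (h (a + b - r))) (Icc a b) r := fun h hh r hr =>
    (hh _ (hrefl hr)).comp_const_sub _ _ hrefl
  have := dist_le_of_trajectories_ODE_Icc_of_le (v := fun r x => -v (a + b - r) x)
    (fun r hr => (hv _ (hrefl hr)).neg) (hrev f hf) (hrev g hg) (hrefl hσ) (hrefl hτ)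
    (sub_le_sub_left hστ _)
  simp only [sub_sub_cancel] at this
  exact this.trans
    (mul_le_mul_of_nonneg_left (hexp _ (by linarith [hσ.1, hτ.2])) dist_nonneg)

theorem lipschitzWith_flow_comp_leftInverse {X : ℝ → E → E}
    (hv : ∀ r ∈ Icc a b, LipschitzWith K (v r))
    (hX : ∀ x, ∀ r ∈ Icc a b, HasDerivWithinAt (X · x) (v r (X r x)) (Icc a b) r)
    (hσ : σ ∈ Icc a b) (hτ : τ ∈ Icc a b) {Y : E → E} (hY : LeftInverse (X τ) Y) :
    LipschitzWith (Real.exp (K * (b - a))).toNNReal (fun x => X σ (Y x)) :=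
  LipschitzWith.of_dist_le_mul fun x y => by
    rw [Real.coe_toNNReal _ (Real.exp_pos _).le, mul_comm]
    simpa only [hY x, hY y] using dist_le_of_trajectories_ODE_Icc hv (hX (Y x)) (hX (Y y)) hσ hτ

end Gronwall

theorem LipschitzWith.addHaar_image_le {E : Type*} [NormedAddCommGroup E] [NormedSpace ℝ E]
    [FiniteDimensional ℝ E] [MeasurableSpace E] [BorelSpace E] {μ : Measure E}
    [μ.IsAddHaarMeasure] {f : E → E} {K : ℝ≥0} (hf : LipschitzWith K f)
    (s : Set E) : μ (f '' s) ≤ (K : ℝ≥0∞) ^ finrank ℝ E * μ s := by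
  rw [Measure.isAddLeftInvariant_eq_smul μ μH[finrank ℝ E]]
  have h := hf.hausdorffMeasure_image_le (d := finrank ℝ E) (Nat.cast_nonneg _) s
  rw [ENNReal.rpow_natCast] at h
  simp only [Measure.smul_apply, ENNReal.smul_def, smul_eq_mul]
  rw [mul_left_comm]
  gcongr

namespace MeasureTheory

section Transport

variable {E : Type*} [NormedAddCommGroup E] [NormedSpace ℝ E] [FiniteDimensional ℝ E]
  [MeasurableSpace E] [BorelSpace E] {μ : Measure E} [μ.IsAddHaarMeasure]

variable {φ ρ : E → E} {K : ℝ≥0} {s u : Set E}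

theorem Measure.map_restrict_le_smul_restrict_of_leftInvOn (hφ : Measurable φ)
    (hρ : LipschitzWith K ρ) (hmaps : MapsTo φ s u) (hinv : LeftInvOn ρ φ s) :
    (μ.restrict s).map φ ≤ ((K : ℝ≥0∞) ^ finrank ℝ E) • μ.restrict u := by
  refine Measure.le_iff.2 fun S hS => ?_
  rw [Measure.map_apply hφ hS, Measure.restrict_apply (hφ hS), Measure.smul_apply,
    Measure.restrict_apply hS, smul_eq_mul]
  have hsub : φ ⁻¹' S ∩ s ⊆ ρ '' (S ∩ u) := fun x ⟨hxS, hxs⟩ =>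
    ⟨φ x, ⟨hxS, hmaps hxs⟩, hinv hxs⟩
  exact (measure_mono hsub).trans (hρ.addHaar_image_le _)

variable {F : Type*} [NormedAddCommGroup F] {g : E → F} {p : ℝ≥0∞}

theorem MemLp.comp_of_lipschitz_leftInvOn (hg : MemLp g p (μ.restrict u)) (hφ : Measurable φ)
    (hρ : LipschitzWith K ρ) (hmaps : MapsTo φ s u) (hinv : LeftInvOn ρ φ s) :
    MemLp (g ∘ φ) p (μ.restrict s) :=
  (hg.of_measure_le_smul (by simp)
    (Measure.map_restrict_le_smul_restrict_of_leftInvOn (μ := μ) hφ hρ hmaps hinv)).comp_of_map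
    hφ.aemeasurable

theorem eLpNorm_comp_le_of_lipschitz_leftInvOn (hg : AEStronglyMeasurable g (μ.restrict u))
    (hφ : Measurable φ) (hρ : LipschitzWith K ρ) (hmaps : MapsTo φ s u)
    (hinv : LeftInvOn ρ φ s) :
    eLpNorm (g ∘ φ) p (μ.restrict s)
      ≤ ((K : ℝ≥0∞) ^ finrank ℝ E) ^ (1 / p).toReal * eLpNorm g p (μ.restrict u) := by
  have hle := Measure.map_restrict_le_smul_restrict_of_leftInvOn (μ := μ) hφ hρ hmaps hinv
  rw [← eLpNorm_map_measure (hg.mono_ac (Measure.absolutelyContinuous_of_le_smul hle))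
    hφ.aemeasurable]
  exact eLpNorm_le_of_measure_le_smul hle

end Transport

section Duality

variable {α β : Type*} [MeasurableSpace α] [MeasurableSpace β] {μ : Measure α} {ν : Measure β}

theorem MemLp.inner_toLp_eq_integral_mul {f g : α → ℝ} (hf : MemLp f 2 μ) (hg : MemLp g 2 μ) :
    inner ℝ (hf.toLp f) (hg.toLp g) = ∫ x, f x * g x ∂μ := by
  rw [L2.inner_def]
  refine integral_congr_ae ?_
  filter_upwards [hf.coeFn_toLp, hg.coeFn_toLp] with x hfx hgx
  rw [hfx, hgx, RCLike.inner_apply', conj_trivial]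

theorem eLpNorm_le_of_integral_mul_self_eq {w : α → ℝ} {w₀ z₀ : β → ℝ} (hw : MemLp w 2 μ)
    (hw₀ : MemLp w₀ 2 ν) (hz₀ : MemLp z₀ 2 ν)
    (hdual : ∫ x, w x * w x ∂μ = ∫ x, w₀ x * z₀ x ∂ν) {c : ℝ≥0∞} (hc : c ≠ ⊤)
    (hz : eLpNorm z₀ 2 ν ≤ c * eLpNorm w 2 μ) :
    eLpNorm w 2 μ ≤ c * eLpNorm w₀ 2 ν := by
  have hz' : ‖hz₀.toLp z₀‖ ≤ c.toReal * ‖hw.toLp w‖ := by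
    simpa only [Lp.norm_toLp, ENNReal.toReal_mul] using
      ENNReal.toReal_mono (ENNReal.mul_ne_top hc hw.eLpNorm_ne_top) hz
  have hsq : ‖hw.toLp w‖ ^ 2 ≤ ‖hw₀.toLp w₀‖ * ‖hz₀.toLp z₀‖ := by
    rw [← real_inner_self_eq_norm_sq, hw.inner_toLp_eq_integral_mul hw, hdual,
      ← hw₀.inner_toLp_eq_integral_mul hz₀]
    exact real_inner_le_norm _ _
  have hreal : ‖hw.toLp w‖ ≤ c.toReal * ‖hw₀.toLp w₀‖ := by
    rcases (norm_nonneg (hw.toLp w)).eq_or_lt with h0 | hpos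
    · rw [← h0]
      positivity
    · refine le_of_mul_le_mul_right ?_ hpos
      calc ‖hw.toLp w‖ * ‖hw.toLp w‖ = ‖hw.toLp w‖ ^ 2 := (sq _).symm
        _ ≤ ‖hw₀.toLp w₀‖ * (c.toReal * ‖hw.toLp w‖) :=
          hsq.trans (mul_le_mul_of_nonneg_left hz' (norm_nonneg _))
        _ = c.toReal * ‖hw₀.toLp w₀‖ * ‖hw.toLp w‖ := by ring
  rw [← ENNReal.toReal_le_toReal hw.eLpNorm_ne_top
    (ENNReal.mul_ne_top hc hw₀.eLpNorm_ne_top), ENNReal.toReal_mul]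
  simpa only [Lp.norm_toLp] using hreal

end Duality

end MeasureTheory

namespace IsSolutionIIM

variable {d : ℕ} {T : ℝ} {D : ℝ → ℝ → EuclideanSpace ℝ (Fin d) → EuclideanSpace ℝ (Fin d)}
  {Ω : Set (EuclideanSpace ℝ (Fin d))} {U₀ V₀ : EuclideanSpace ℝ (Fin d) → ℝ}
  {U V : EuclideanSpace ℝ (Fin d) → ℝ → ℝ} {t : ℝ}

theorem integral_sub_mul_eq (hU : IsSolutionIIM d T D Ω U₀ U) (hV : IsSolutionIIM d T D Ω V₀ V)
    (hU₀ : MemLp U₀ 2 (volume.restrict (D T 0 '' Ω)))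
    (hV₀ : MemLp V₀ 2 (volume.restrict (D T 0 '' Ω)))
    {Ψ : EuclideanSpace ℝ (Fin d) → ℝ} (hΨ : MemLp Ψ 2 volume) (hΨΩ : ∀ x ∉ Ω, Ψ x = 0)
    (ht : t ∈ Icc 0 T) (hΨt : MemLp (fun x => Ψ (D t T x)) 2 (volume.restrict (D T t '' Ω)))
    (hΨ0 : MemLp (fun x => Ψ (D 0 T x)) 2 (volume.restrict (D T 0 '' Ω))) :
    ∫ x in D T t '' Ω, (U x t - V x t) * Ψ (D t T x)
      = ∫ x in D T 0 '' Ω, (U₀ x - V₀ x) * Ψ (D 0 T x) := by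
  have hsupp := ae_of_all volume hΨΩ
  simp only [sub_mul]
  rw [integral_sub, integral_sub, hU.2.2 Ψ hΨ hsupp t ht, hV.2.2 Ψ hΨ hsupp t ht]
  exacts [hU₀.integrable_mul hΨ0, hV₀.integrable_mul hΨ0, (hU.1 t ht).integrable_mul hΨt,
    (hV.1 t ht).integrable_mul hΨt]

theorem eLpNorm_sub_le (hU : IsSolutionIIM d T D Ω U₀ U) (hV : IsSolutionIIM d T D Ω V₀ V)
    (hU₀ : MemLp U₀ 2 (volume.restrict (D T 0 '' Ω)))
    (hV₀ : MemLp V₀ 2 (volume.restrict (D T 0 '' Ω))) (hΩ : MeasurableSet Ω)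
    (hDTT : ∀ x, D T T x = x)
    (hDinv : ∀ τ ∈ Icc (0:ℝ) T, (∀ x, D τ T (D T τ x) = x) ∧ (∀ x, D T τ (D τ T x) = x))
    {K : ℝ≥0} (hDlip : ∀ σ ∈ Icc (0:ℝ) T, ∀ τ ∈ Icc (0:ℝ) T,
      LipschitzWith K (fun x => D T σ (D τ T x)))
    (ht : t ∈ Icc 0 T) :
    eLpNorm (fun x => U x t - V x t) 2 (volume.restrict (D T t '' Ω))
      ≤ (K ^ d : ℝ≥0∞) ^ (1 / 2 : ℝ)
        * eLpNorm (fun x => U₀ x - V₀ x) 2 (volume.restrict (D T 0 '' Ω)) := by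
  have h0 : (0:ℝ) ∈ Icc 0 T := ⟨le_rfl, ht.1.trans ht.2⟩
  have hTT : T ∈ Icc 0 T := ⟨ht.1.trans ht.2, le_rfl⟩
  obtain ⟨hleft_t, hright_t⟩ := hDinv t ht
  obtain ⟨hleft_0, hright_0⟩ := hDinv 0 h0
  have hDTt : LipschitzWith K (D T t) := by simpa only [hDTT] using hDlip t ht T hTT
  have hDtT : LipschitzWith K (D t T) := by simpa only [hDTT] using hDlip T hTT t ht
  have hD0T : LipschitzWith K (D 0 T) := by simpa only [hDTT] using hDlip T hTT 0 h0
  have hSt : MeasurableSet (D T t '' Ω) := by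
    rw [image_eq_preimage_of_inverse hleft_t hright_t]
    exact hDtT.continuous.measurable hΩ
  have hS0 : MeasurableSet (D T 0 '' Ω) := by
    rw [image_eq_preimage_of_inverse hleft_0 hright_0]
    exact hD0T.continuous.measurable hΩ
  set W := fun x => U x t - V x t
  have hW : MemLp W 2 (volume.restrict (D T t '' Ω)) := (hU.1 t ht).sub (hV.1 t ht)
  set Ψ := Ω.indicator (W ∘ D T t)
  have hΨ : MemLp Ψ 2 volume := (memLp_indicator_iff_restrict hΩ).2
    (hW.comp_of_lipschitz_leftInvOn hDTt.continuous.measurable hDtT (mapsTo_image _ _)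
      fun y _ => hleft_t y)
  have hΨt : EqOn (Ψ ∘ D t T) W (D T t '' Ω) := by
    rintro _ ⟨y, hy, rfl⟩
    simp [Ψ, hleft_t y, hy]
  set φ := D T t ∘ D 0 T
  have hΨ0 : EqOn (Ψ ∘ D 0 T) (W ∘ φ) (D T 0 '' Ω) := by
    rintro _ ⟨y, hy, rfl⟩
    simp [Ψ, φ, hleft_0 y, hy]
  have hφ : Measurable φ := (hDTt.continuous.comp hD0T.continuous).measurable
  have hφmaps : MapsTo φ (D T 0 '' Ω) (D T t '' Ω) := by
    rintro _ ⟨y, hy, rfl⟩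
    exact ⟨y, hy, by simp [φ, hleft_0]⟩
  have hφinv : LeftInvOn (fun x => D T 0 (D t T x)) φ (D T 0 '' Ω) := by
    rintro _ ⟨y, hy, rfl⟩
    simp [φ, hleft_0, hleft_t]
  have hΨtae : Ψ ∘ D t T =ᵐ[volume.restrict (D T t '' Ω)] W :=
    (ae_restrict_iff' hSt).2 (ae_of_all _ hΨt)
  have hΨ0ae : Ψ ∘ D 0 T =ᵐ[volume.restrict (D T 0 '' Ω)] W ∘ φ :=
    (ae_restrict_iff' hS0).2 (ae_of_all _ hΨ0)
  have hZ : MemLp (Ψ ∘ D 0 T) 2 (volume.restrict (D T 0 '' Ω)) :=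
    (hW.comp_of_lipschitz_leftInvOn hφ (hDlip 0 h0 t ht) hφmaps hφinv).ae_eq
      hΨ0ae.symm
  refine eLpNorm_le_of_integral_mul_self_eq hW (hU₀.sub hV₀) hZ ?_ (by finiteness) ?_
  · refine (setIntegral_congr_fun hSt fun x hx => ?_).trans (hU.integral_sub_mul_eq hV hU₀ hV₀
      hΨ (fun x hx => indicator_of_notMem hx _) ht (hW.ae_eq hΨtae.symm) hZ)
    exact congrArg (W x * ·) (hΨt hx).symm
  · rw [eLpNorm_congr_ae hΨ0ae]
    convert eLpNorm_comp_le_of_lipschitz_leftInvOn hW.1 hφ (hDlip 0 h0 t ht) hφmaps hφinv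
      using 3 <;> simp

end IsSolutionIIM

theorem IIM_stability_general
    (d : ℕ) (T L_A : ℝ)
    (A : EuclideanSpace ℝ (Fin d) → ℝ → EuclideanSpace ℝ (Fin d))
    (hAdiff : ∀ t ∈ Set.Icc (0:ℝ) T, ContDiff ℝ 1 (fun x => A x t))
    (hAgrad : ∀ (x : EuclideanSpace ℝ (Fin d)), ∀ t ∈ Set.Icc (0:ℝ) T,
      ‖fderiv ℝ (fun x => A x t) x‖ ≤ L_A)
    (D : ℝ → ℝ → EuclideanSpace ℝ (Fin d) → EuclideanSpace ℝ (Fin d))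
    (hDflow : ∀ x : EuclideanSpace ℝ (Fin d), D T T x = x ∧
      ∀ τ ∈ Set.Icc (0:ℝ) T,
        HasDerivWithinAt (fun σ => D T σ x) (A (D T τ x) τ) (Set.Icc (0:ℝ) T) τ)
    (hDinv : ∀ t ∈ Set.Icc (0:ℝ) T,
      (∀ x, D t T (D T t x) = x) ∧ (∀ x, D T t (D t T x) = x))
    (Ω : Set (EuclideanSpace ℝ (Fin d))) (hΩopen : IsOpen Ω)
    (U₀ V₀ : EuclideanSpace ℝ (Fin d) → ℝ)
    (hU₀ : MemLp U₀ 2 volume) (hV₀ : MemLp V₀ 2 volume)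
    (U V : EuclideanSpace ℝ (Fin d) → ℝ → ℝ)
    (hU : IsSolutionIIM d T D Ω U₀ U) (hV : IsSolutionIIM d T D Ω V₀ V) :
    ∀ t ∈ Set.Icc (0:ℝ) T,
      (eLpNorm (fun x => U x t - V x t) 2 (volume.restrict (D T t '' Ω))).toReal
        ≤ Real.exp ((d : ℝ) * L_A * T / 2)
          * (eLpNorm (fun x => U₀ x - V₀ x) 2 (volume.restrict (D T 0 '' Ω))).toReal := by
  intro t ht
  have hL_A : 0 ≤ L_A := (norm_nonneg _).trans (hAgrad 0 0 ⟨le_rfl, ht.1.trans ht.2⟩)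
  have hAlip : ∀ τ ∈ Icc (0:ℝ) T, LipschitzWith L_A.toNNReal (fun x => A x τ) := fun τ hτ =>
    lipschitzWith_of_nnnorm_fderiv_le ((hAdiff τ hτ).differentiable one_ne_zero)
      fun x => NNReal.le_toNNReal_of_coe_le (hAgrad x τ hτ)
  have hDlip : ∀ σ ∈ Icc (0:ℝ) T, ∀ τ ∈ Icc (0:ℝ) T,
      LipschitzWith (Real.exp (L_A * T)).toNNReal (fun x => D T σ (D τ T x)) :=
    fun σ hσ τ hτ => by
      simpa only [Real.coe_toNNReal _ hL_A, sub_zero] using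
        lipschitzWith_flow_comp_leftInverse hAlip (fun x => (hDflow x).2) hσ hτ (hDinv τ hτ).2
  have hconst : (((Real.exp (L_A * T)).toNNReal : ℝ≥0∞) ^ d) ^ (1 / 2 : ℝ)
      = ENNReal.ofReal (Real.exp (d * L_A * T / 2)) := by
    rw [← ENNReal.ofReal.eq_def, ← ENNReal.ofReal_pow (Real.exp_pos _).le,
      ENNReal.ofReal_rpow_of_nonneg (by positivity) (by norm_num), ← Real.exp_nat_mul,
      ← Real.exp_mul]
    ring_nf
  have h := IsSolutionIIM.eLpNorm_sub_le hU hV (hU₀.restrict _) (hV₀.restrict _)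
    hΩopen.measurableSet (fun x => (hDflow x).1) hDinv hDlip ht
  rw [hconst] at h
  have h' := ENNReal.toReal_mono (ENNReal.mul_ne_top ENNReal.ofReal_ne_top
    ((hU₀.sub hV₀).restrict _).eLpNorm_ne_top) h
  rwa [ENNReal.toReal_mul, ENNReal.toReal_ofReal (Real.exp_pos _).le] at h'

/-- **Stability, Theorem 5.2.** Under the model hypotheses, if `U` and `V` are
solutions of the integral invariant model with initial data `Ũ₀` and `Ṽ₀` (both in `L²(ℝ^d)`
and vanishing a.e. outside `Ω̃(0)`), then for every `t ∈ [0,T]`,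
`‖U(·,t) − V(·,t)‖_{L²(Ω̃(t))} ≤ e^{M_A T/2}‖Ũ₀ − Ṽ₀‖_{L²(Ω̃(0))}`, with `M_A = d·L_A`. -/
theorem IIM_stability
    (d : ℕ) (T L_A : ℝ) (hT : 0 < T) (hL : 0 < L_A)
    (A : EuclideanSpace ℝ (Fin d) → ℝ → EuclideanSpace ℝ (Fin d))
    (hAcont : ContinuousOn (fun p : EuclideanSpace ℝ (Fin d) × ℝ => A p.1 p.2)
      (Set.univ ×ˢ Set.Icc (0:ℝ) T))
    (hAdiff : ∀ t ∈ Set.Icc (0:ℝ) T, ContDiff ℝ 1 (fun x => A x t))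
    (hAgrad : ∀ (x : EuclideanSpace ℝ (Fin d)), ∀ t ∈ Set.Icc (0:ℝ) T,
      ‖fderiv ℝ (fun x => A x t) x‖ ≤ L_A)
    (D : ℝ → ℝ → EuclideanSpace ℝ (Fin d) → EuclideanSpace ℝ (Fin d))
    (hDflow : ∀ x : EuclideanSpace ℝ (Fin d), D T T x = x ∧
      ∀ τ ∈ Set.Icc (0:ℝ) T,
        HasDerivWithinAt (fun σ => D T σ x) (A (D T τ x) τ) (Set.Icc (0:ℝ) T) τ)
    (hDinv : ∀ t ∈ Set.Icc (0:ℝ) T,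
      (∀ x, D t T (D T t x) = x) ∧ (∀ x, D T t (D t T x) = x))
    (hDdiffeo : ∀ t ∈ Set.Icc (0:ℝ) T, ContDiff ℝ 1 (D t T))
    (hDjac : ∀ t ∈ Set.Icc (0:ℝ) T, ∀ x : EuclideanSpace ℝ (Fin d),
      Real.exp (-((d : ℝ) * L_A * (T - t))) ≤ |(fderiv ℝ (D t T) x).det| ∧
      |(fderiv ℝ (D t T) x).det| ≤ Real.exp ((d : ℝ) * L_A * (T - t)))
    (Ω : Set (EuclideanSpace ℝ (Fin d))) (hΩopen : IsOpen Ω)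
    (hΩbd : Bornology.IsBounded Ω)
    (U₀ V₀ : EuclideanSpace ℝ (Fin d) → ℝ)
    (hU₀ : MemLp U₀ 2 volume) (hV₀ : MemLp V₀ 2 volume)
    (hU₀supp : ∀ᵐ x ∂(volume : Measure (EuclideanSpace ℝ (Fin d))),
      x ∉ D T 0 '' Ω → U₀ x = 0)
    (hV₀supp : ∀ᵐ x ∂(volume : Measure (EuclideanSpace ℝ (Fin d))),
      x ∉ D T 0 '' Ω → V₀ x = 0)
    (U V : EuclideanSpace ℝ (Fin d) → ℝ → ℝ)
    (hU : IsSolutionIIM d T D Ω U₀ U) (hV : IsSolutionIIM d T D Ω V₀ V) :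
    ∀ t ∈ Set.Icc (0:ℝ) T,
      (eLpNorm (fun x => U x t - V x t) 2 (volume.restrict (D T t '' Ω))).toReal
        ≤ Real.exp ((d : ℝ) * L_A * T / 2)
          * (eLpNorm (fun x => U₀ x - V₀ x) 2 (volume.restrict (D T 0 '' Ω))).toReal :=
  IIM_stability_general d T L_A A hAdiff hAgrad D hDflow hDinv Ω hΩopen U₀ V₀ hU₀ hV₀ U V hU hV
end

section
/- (Higher temporal integrability, Theorem 6.2.) Under the model hypotheses, let U be the solution of the integral invariant model with initial datum Ũ₀ ∈ L²(ℝ^d) vanishing almost everywhere outside Ω̃(0). Then for every 1 ≤ q < ∞, the function t ↦ ‖U(·,t)‖_{L²(Ω̃(t))} belongs to L^q([0,T]) with (∫_0^T ‖U(·,t)‖_{L²(Ω̃(t))}^q dt)^{1/q} ≤ T^{1/q}·e^{M_A T/2}·‖Ũ₀‖_{L²(Ω̃(0))}; moreover it belongs to L^∞([0,T]) with ess sup_{t∈[0,T]} ‖U(·,t)‖_{L²(Ω̃(t))} ≤ e^{M_A T/2}·‖Ũ₀‖_{L²(Ω̃(0))}, and ‖U‖_{L^q([0,T],L²(Ω̃(t)))}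 → ‖U‖_{L^∞([0,T],L²(Ω̃(t)))} as q → ∞. -/
open MeasureTheory

/-- The time-slice `L²(Ω̃(t))`-norm of `U` at time `t`. -/
noncomputable def solNorm (d : ℕ) (T : ℝ)
    (D : ℝ → ℝ → EuclideanSpace ℝ (Fin d) → EuclideanSpace ℝ (Fin d))
    (Ω : Set (EuclideanSpace ℝ (Fin d)))
    (U : EuclideanSpace ℝ (Fin d) → ℝ → ℝ) (t : ℝ) : ℝ :=
  (eLpNorm (fun x => U x t) 2 (volume.restrict (D T t '' Ω))).toReal


section IIMAux

open MeasureTheory Real Set Filter NNReal ENNReal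

lemma IIM_aux_det_le_pow {d : ℕ} (W : EuclideanSpace ℝ (Fin d) →L[ℝ] EuclideanSpace ℝ (Fin d))
    {K : ℝ} (hK : 0 ≤ K) (hW : ‖W‖ ≤ K) : |W.det| ≤ K ^ d := by
  have h1 : (volume : Measure (EuclideanSpace ℝ (Fin d))) (W '' Metric.closedBall 0 1)
      = ENNReal.ofReal |W.det| * volume (Metric.closedBall (0:EuclideanSpace ℝ (Fin d)) 1) := by
    simpa [ContinuousLinearMap.det] using
      (volume : Measure (EuclideanSpace ℝ (Fin d))).addHaar_image_continuousLinearMap W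
        (Metric.closedBall 0 1)
  have hsub : W '' Metric.closedBall 0 1 ⊆ Metric.closedBall (0:EuclideanSpace ℝ (Fin d)) K := by
    rintro y ⟨x, hx, rfl⟩
    simp only [Metric.mem_closedBall, dist_zero_right] at *
    calc ‖W x‖ ≤ ‖W‖ * ‖x‖ := W.le_opNorm x
    _ ≤ K * 1 := mul_le_mul hW hx (norm_nonneg _) hK
    _ = K := mul_one K
  have h2 : (volume : Measure (EuclideanSpace ℝ (Fin d)))
        (Metric.closedBall (0:EuclideanSpace ℝ (Fin d)) K)
      = ENNReal.ofReal (K ^ (Module.finrank ℝ (EuclideanSpace ℝ (Fin d)))) *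
        volume (Metric.closedBall (0:EuclideanSpace ℝ (Fin d)) 1) :=
    Measure.addHaar_closedBall' _ _ hK
  have hfr : Module.finrank ℝ (EuclideanSpace ℝ (Fin d)) = d := finrank_euclideanSpace_fin
  have hpos : 0 < (volume : Measure (EuclideanSpace ℝ (Fin d)))
      (Metric.closedBall (0:EuclideanSpace ℝ (Fin d)) 1) := Metric.measure_closedBall_pos _ _ one_pos
  have hfin : (volume : Measure (EuclideanSpace ℝ (Fin d)))
      (Metric.closedBall (0:EuclideanSpace ℝ (Fin d)) 1) ≠ ⊤ := measure_closedBall_lt_top.ne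
  have hle : ENNReal.ofReal |W.det| * volume (Metric.closedBall (0:EuclideanSpace ℝ (Fin d)) 1)
      ≤ ENNReal.ofReal (K ^ d) * volume (Metric.closedBall (0:EuclideanSpace ℝ (Fin d)) 1) := by
    rw [hfr] at h2
    rw [← h1, ← h2]
    exact measure_mono hsub
  have := (ENNReal.mul_le_mul_iff_left hpos.ne' hfin).1 hle
  rwa [ENNReal.ofReal_le_ofReal_iff (by positivity)] at this

lemma IIM_aux_inv_deriv {d : ℕ}
    {f g : EuclideanSpace ℝ (Fin d) → EuclideanSpace ℝ (Fin d)}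
    (hf : ContDiff ℝ 1 f)
    (hdet : ∀ x, (fderiv ℝ f x).det ≠ 0)
    (hgf : ∀ x, g (f x) = x) (hfg : ∀ x, f (g x) = x)
    (y : EuclideanSpace ℝ (Fin d)) :
    HasFDerivAt g (fderiv ℝ g y) y ∧
      (fderiv ℝ g y).det * (fderiv ℝ f (g y)).det = 1 := by
  have hdet' : LinearMap.det ((fderiv ℝ f (g y)) :
      EuclideanSpace ℝ (Fin d) →ₗ[ℝ] EuclideanSpace ℝ (Fin d)) ≠ 0 := hdet (g y)
  let e₀ := LinearMap.equivOfDetNeZero _ hdet'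
  let e := e₀.toContinuousLinearEquiv
  have hecoe : (e : EuclideanSpace ℝ (Fin d) →L[ℝ] EuclideanSpace ℝ (Fin d))
      = fderiv ℝ f (g y) := by
    ext x
    have h0 : (e₀ : EuclideanSpace ℝ (Fin d) →ₗ[ℝ] EuclideanSpace ℝ (Fin d))
        = (fderiv ℝ f (g y) : EuclideanSpace ℝ (Fin d) →ₗ[ℝ] EuclideanSpace ℝ (Fin d)) :=
      LinearEquiv.coe_ofIsUnitDet _
    have h1 := DFunLike.congr_fun h0 x
    exact congrArg (fun v : EuclideanSpace ℝ (Fin d) => v _) h1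
  have hstrict : HasStrictFDerivAt f
      (e : EuclideanSpace ℝ (Fin d) →L[ℝ] EuclideanSpace ℝ (Fin d)) (g y) := by
    rw [hecoe]
    exact (hf.contDiffAt).hasStrictFDerivAt one_ne_zero
  have hfa : f (g y) = y := hfg y
  have hloc := hstrict.to_localInverse
  have hev : ∀ᶠ z in nhds (f (g y)), g z = hstrict.localInverse f _ _ z :=
    hstrict.localInverse_unique (Filter.Eventually.of_forall fun x => hgf x)
  have hgderiv : HasStrictFDerivAt g
      (e.symm : EuclideanSpace ℝ (Fin d) →L[ℝ] EuclideanSpace ℝ (Fin d)) y := by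
    rw [← hfa]
    exact hloc.congr_of_eventuallyEq (EventuallyEq.symm hev)
  have hgd := hgderiv.hasFDerivAt
  have hfd : fderiv ℝ g y = (e.symm : _ →L[ℝ] _) := hgd.fderiv
  refine ⟨by rw [hfd]; exact hgd, ?_⟩
  rw [hfd, ← hecoe]
  simp only [ContinuousLinearMap.det]
  rw [← LinearMap.det_comp]
  have hcomp : (((e.symm : EuclideanSpace ℝ (Fin d) →L[ℝ] EuclideanSpace ℝ (Fin d)) :
        EuclideanSpace ℝ (Fin d) →ₗ[ℝ] EuclideanSpace ℝ (Fin d)).comp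
      (((e : EuclideanSpace ℝ (Fin d) →L[ℝ] EuclideanSpace ℝ (Fin d))) :
        EuclideanSpace ℝ (Fin d) →ₗ[ℝ] EuclideanSpace ℝ (Fin d))) = LinearMap.id := by
    ext x
    simp
  rw [hcomp, LinearMap.det_id]

lemma IIM_aux_flow_dist {d : ℕ} {T L_A : ℝ} (hT : 0 < T) (hL : 0 < L_A)
    {A : EuclideanSpace ℝ (Fin d) → ℝ → EuclideanSpace ℝ (Fin d)}
    (hAlip : ∀ t ∈ Set.Icc (0:ℝ) T, LipschitzWith L_A.toNNReal (fun x => A x t))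
    {D : ℝ → ℝ → EuclideanSpace ℝ (Fin d) → EuclideanSpace ℝ (Fin d)}
    (hDflow : ∀ x, ∀ τ ∈ Set.Icc (0:ℝ) T,
        HasDerivWithinAt (fun σ => D T σ x) (A (D T τ x) τ) (Set.Icc (0:ℝ) T) τ)
    (x y : EuclideanSpace ℝ (Fin d)) {s t : ℝ}
    (hs : s ∈ Set.Icc (0:ℝ) T) (ht : t ∈ Set.Icc (0:ℝ) T) :
    dist (D T s x) (D T s y) ≤ Real.exp (L_A * |s - t|) * dist (D T t x) (D T t y) := by
  have hproj : ∀ τ ∈ Set.Icc (0:ℝ) T, max 0 (min τ T) = τ := by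
    intro τ hτ
    rw [min_eq_left hτ.2, max_eq_right hτ.1]
  have hprojmem : ∀ τ : ℝ, max 0 (min τ T) ∈ Set.Icc (0:ℝ) T :=
    fun τ => ⟨le_max_left _ _, max_le (le_of_lt hT) (min_le_right _ _)⟩
  have hcontflow : ∀ z, ContinuousOn (fun τ => D T τ z) (Set.Icc (0:ℝ) T) :=
    fun z τ hτ => (hDflow z τ hτ).continuousWithinAt
  have hKcoe : ((L_A.toNNReal : ℝ≥0) : ℝ) = L_A := Real.coe_toNNReal _ hL.le
  rcases le_total t s with h | h
  · -- forward in time, from t to s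
    set v : ℝ → EuclideanSpace ℝ (Fin d) → EuclideanSpace ℝ (Fin d) :=
      fun τ z => A z (max 0 (min τ T)) with hv_def
    have hv : ∀ τ, LipschitzWith L_A.toNNReal (v τ) := fun τ => hAlip _ (hprojmem τ)
    have hsub : Set.Icc t s ⊆ Set.Icc (0:ℝ) T := Set.Icc_subset_Icc ht.1 hs.2
    have hderiv : ∀ z, ∀ τ ∈ Set.Ico t s,
        HasDerivWithinAt (fun σ => D T σ z) (v τ (D T τ z)) (Set.Ici τ) τ := by
      intro z τ hτ
      have hτ01 : τ ∈ Set.Icc (0:ℝ) T := ⟨le_trans ht.1 hτ.1, le_trans hτ.2.le hs.2⟩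
      have hbase := hDflow z τ hτ01
      have hmem : Set.Icc (0:ℝ) T ∈ nhdsWithin τ (Set.Ici τ) := by
        apply mem_nhdsWithin.2
        refine ⟨Set.Iio T, isOpen_Iio, lt_of_lt_of_le hτ.2 hs.2, ?_⟩
        rintro z' ⟨hz1, hz2⟩
        exact ⟨le_trans hτ01.1 hz2, le_of_lt hz1⟩
      have := hbase.mono_of_mem_nhdsWithin hmem
      simpa [hv_def, hproj τ hτ01] using this
    have key := dist_le_of_trajectories_ODE hv
      ((hcontflow x).mono hsub) (hderiv x)
      ((hcontflow y).mono hsub) (hderiv y) (le_refl (dist (D T t x) (D T t y)))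
      s ⟨h, le_refl s⟩
    rw [abs_of_nonneg (sub_nonneg.2 h)]
    calc dist (D T s x) (D T s y)
        ≤ dist (D T t x) (D T t y) * Real.exp (L_A.toNNReal * (s - t)) := key
      _ = Real.exp (L_A * (s - t)) * dist (D T t x) (D T t y) := by
          rw [hKcoe, mul_comm]
  · -- backward in time: use reversed trajectories on [s, t]
    set v : ℝ → EuclideanSpace ℝ (Fin d) → EuclideanSpace ℝ (Fin d) :=
      fun τ z => (-1 : ℝ) • A z (max 0 (min (t + s - τ) T)) with hv_def
    have hv : ∀ τ, LipschitzWith L_A.toNNReal (v τ) := by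
      intro τ
      intro z w
      have := hAlip _ (hprojmem (t + s - τ)) z w
      simpa [hv_def, edist_neg_neg, neg_smul, one_smul] using this
    have hsub : Set.Icc s t ⊆ Set.Icc (0:ℝ) T := Set.Icc_subset_Icc hs.1 ht.2
    have hσmaps : Set.MapsTo (fun τ => t + s - τ) (Set.Icc s t) (Set.Icc s t) := by
      rintro τ ⟨h1, h2⟩
      constructor <;> simp only [Set.mem_Icc] <;> nlinarith
    have hFcont : ∀ z, ContinuousOn (fun τ => D T (t + s - τ) z) (Set.Icc s t) := by
      intro z
      apply ContinuousOn.comp (hcontflow z)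
        (Continuous.continuousOn (by continuity))
      exact fun τ hτ => hsub (hσmaps hτ)
    have hderiv : ∀ z, ∀ τ ∈ Set.Ico s t,
        HasDerivWithinAt (fun σ => D T (t + s - σ) z)
          (v τ (D T (t + s - τ) z)) (Set.Ici τ) τ := by
      intro z τ hτ
      have hτst : τ ∈ Set.Icc s t := ⟨hτ.1, hτ.2.le⟩
      have hστ : t + s - τ ∈ Set.Icc s t := hσmaps hτst
      have hστ01 : t + s - τ ∈ Set.Icc (0:ℝ) T := hsub hστ
      have hg := hDflow z (t + s - τ) hστ01
      have hσd : HasDerivWithinAt (fun σ : ℝ => t + s - σ) (-1 : ℝ) (Set.Icc s t) τ := by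
        simpa using (hasDerivWithinAt_id τ (Set.Icc s t)).const_sub (t + s)
      have hcomp := HasDerivWithinAt.scomp (hg := hg) (hh := hσd)
        (hst := fun u hu => hsub (hσmaps hu))
      have hmem : Set.Icc s t ∈ nhdsWithin τ (Set.Ici τ) := by
        apply mem_nhdsWithin.2
        refine ⟨Set.Iio t, isOpen_Iio, hτ.2, ?_⟩
        rintro z' ⟨hz1, hz2⟩
        exact ⟨le_trans hτ.1 hz2, le_of_lt hz1⟩
      have := hcomp.mono_of_mem_nhdsWithin hmem
      simpa [hv_def, hproj _ hστ01, Function.comp_def] using this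
    have key := dist_le_of_trajectories_ODE hv
      (hFcont x) (hderiv x) (hFcont y) (hderiv y)
      (le_refl (dist (D T (t + s - s) x) (D T (t + s - s) y)))
      t ⟨h, le_refl t⟩
    simp only [add_sub_cancel_right, add_sub_cancel_left] at key
    rw [abs_of_nonpos (sub_nonpos.2 h), neg_sub]
    calc dist (D T s x) (D T s y)
        ≤ dist (D T t x) (D T t y) * Real.exp (L_A.toNNReal * (t - s)) := key
      _ = Real.exp (L_A * (t - s)) * dist (D T t x) (D T t y) := by
          rw [hKcoe, mul_comm]

private lemma IIM_rpow_one_div_tendsto {c : ℝ} (hc : 0 < c) :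
    Tendsto (fun q : ℝ => c ^ (1/q)) atTop (nhds 1) := by
  have h1 : Tendsto (fun q : ℝ => Real.log c * (1/q)) atTop (nhds 0) := by
    simpa using (tendsto_inv_atTop_zero.const_mul (Real.log c))
  have h2 := (Real.continuous_exp.tendsto 0).comp h1
  simp only [Real.exp_zero] at h2
  refine h2.congr fun q => ?_
  simp [Real.rpow_def_of_pos hc, Function.comp]

lemma IIM_aux_tendsto {α : Type*} [MeasurableSpace α] (μ : Measure α) [IsFiniteMeasure μ]
    (f : α → ℝ) (hf : AEStronglyMeasurable f μ) {C : ℝ} (hC : ∀ᵐ x ∂μ, ‖f x‖ ≤ C) :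
    Filter.Tendsto (fun q : ℝ => (eLpNorm f (ENNReal.ofReal q) μ).toReal)
      Filter.atTop (nhds ((eLpNorm f ⊤ μ).toReal)) := by
  -- replace f by a strongly measurable representative
  obtain ⟨g, hg, hfg⟩ : ∃ g, StronglyMeasurable g ∧ f =ᵐ[μ] g :=
    ⟨hf.mk f, hf.stronglyMeasurable_mk, hf.ae_eq_mk⟩
  have hCg : ∀ᵐ x ∂μ, ‖g x‖ ≤ C := by
    filter_upwards [hC, hfg] with x h1 h2
    rw [← h2]; exact h1
  have hfun : (fun q : ℝ => (eLpNorm f (ENNReal.ofReal q) μ).toReal)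
      = fun q : ℝ => (eLpNorm g (ENNReal.ofReal q) μ).toReal := by
    funext q; rw [eLpNorm_congr_ae hfg]
  rw [hfun, eLpNorm_congr_ae hfg]
  clear hfun hC hfg hf f
  set S := eLpNormEssSup g μ with hS_def
  have hStop : S ≠ ⊤ := (eLpNormEssSup_lt_top_of_ae_bound hCg).ne
  rw [eLpNorm_exponent_top, ← hS_def]
  have h_up : ∀ q : ℝ, 1 ≤ q →
      eLpNorm g (ENNReal.ofReal q) μ ≤ S * μ Set.univ ^ (1/q : ℝ) := by
    intro q hq
    have := eLpNorm_le_eLpNorm_mul_rpow_measure_univ (μ := μ) (p := ENNReal.ofReal q) (q := ⊤)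
      le_top hg.aestronglyMeasurable
    rw [eLpNorm_exponent_top, ← hS_def] at this
    simpa [ENNReal.toReal_ofReal (le_trans zero_le_one hq)] using this
  by_cases hS0 : S = 0
  · -- essSup zero
    have hzero : ∀ q : ℝ, 1 ≤ q → (eLpNorm g (ENNReal.ofReal q) μ).toReal = 0 := by
      intro q hq
      have := h_up q hq
      rw [hS0, zero_mul] at this
      simp [le_antisymm this zero_le]
    rw [hS0]
    simp only [ENNReal.toReal_zero]
    apply Filter.Tendsto.congr' _ tendsto_const_nhds
    filter_upwards [eventually_ge_atTop (1:ℝ)] with q hq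
    exact (hzero q hq).symm
  · have hμ0 : μ Set.univ ≠ 0 := by
      intro h
      apply hS0
      rw [hS_def, Measure.measure_univ_eq_zero.1 h]
      simp
    have hm : 0 < (μ Set.univ).toReal :=
      ENNReal.toReal_pos hμ0 (measure_ne_top _ _)
    have hup_real : ∀ q : ℝ, 1 ≤ q →
        (eLpNorm g (ENNReal.ofReal q) μ).toReal ≤ S.toReal * (μ Set.univ).toReal ^ (1/q) := by
      intro q hq
      have h1 := h_up q hq
      have h2 : S * μ Set.univ ^ (1/q : ℝ) ≠ ⊤ :=
        ENNReal.mul_ne_top hStop (ENNReal.rpow_ne_top_of_nonneg (by positivity) (measure_ne_top _ _))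
      calc (eLpNorm g (ENNReal.ofReal q) μ).toReal
          ≤ (S * μ Set.univ ^ (1/q : ℝ)).toReal := ENNReal.toReal_mono h2 h1
        _ = S.toReal * (μ Set.univ).toReal ^ (1/q) := by
            rw [ENNReal.toReal_mul, ← ENNReal.toReal_rpow]
    have hup_tendsto : Tendsto (fun q : ℝ => S.toReal * (μ Set.univ).toReal ^ (1/q))
        atTop (nhds (S.toReal)) := by
      have := (IIM_rpow_one_div_tendsto hm).const_mul S.toReal
      simpa using this
    rw [tendsto_order]
    constructor
    · intro a ha
      rcases lt_or_ge a 0 with ha0 | ha0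
      · exact Filter.Eventually.of_forall fun q => lt_of_lt_of_le ha0 ENNReal.toReal_nonneg
      · obtain ⟨a', ha1, ha2⟩ := exists_between ha
        have ha'0 : 0 ≤ a' := le_trans ha0 ha1.le
        set E := {x | a' < |g x|} with hE_def
        have hEmeas : MeasurableSet E :=
          measurableSet_lt measurable_const hg.measurable.abs
        have hEpos : 0 < μ E := by
          rcases eq_or_lt_of_le (zero_le : 0 ≤ μ E) with h | h
          · exfalso
            have hae : ∀ᵐ x ∂μ, ‖g x‖ ≤ a' := by
              rw [ae_iff]
              convert h.symm using 2
              ext x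
              simp only [hE_def, Real.norm_eq_abs, Set.mem_setOf_eq, not_le]
            have := eLpNormEssSup_le_of_ae_bound hae
            rw [← hS_def] at this
            have : S.toReal ≤ a' := by
              calc S.toReal ≤ (ENNReal.ofReal a').toReal := ENNReal.toReal_mono ENNReal.ofReal_ne_top this
              _ = a' := ENNReal.toReal_ofReal ha'0
            linarith
          · exact h
        have hEfin : μ E ≠ ⊤ := measure_ne_top _ _
        have hmE : 0 < (μ E).toReal := ENNReal.toReal_pos hEpos.ne' hEfin
        have hlow : ∀ q : ℝ, 1 ≤ q →
            a' * (μ E).toReal ^ (1/q) ≤ (eLpNorm g (ENNReal.ofReal q) μ).toReal := by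
          intro q hq
          have hq0 : (0:ℝ) < q := lt_of_lt_of_le zero_lt_one hq
          have hp0 : ENNReal.ofReal q ≠ 0 := by
            simp [ENNReal.ofReal_eq_zero, not_le, hq0]
          have hkey : ENNReal.ofReal a' * μ E ^ (1/q) ≤ eLpNorm g (ENNReal.ofReal q) μ := by
            rw [eLpNorm_eq_lintegral_rpow_enorm_toReal hp0 ENNReal.ofReal_ne_top,
              ENNReal.toReal_ofReal hq0.le]
            have hstep : ENNReal.ofReal a' ^ (q:ℝ) * μ E ≤ ∫⁻ x, (‖g x‖₊ : ℝ≥0∞) ^ (q:ℝ) ∂μ := by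
              calc ENNReal.ofReal a' ^ (q:ℝ) * μ E
                  = ∫⁻ _ in E, ENNReal.ofReal a' ^ (q:ℝ) ∂μ := (setLIntegral_const _ _).symm
                _ ≤ ∫⁻ x in E, (‖g x‖₊ : ℝ≥0∞) ^ (q:ℝ) ∂μ := by
                    apply setLIntegral_mono (by measurability)
                    intro x hx
                    apply ENNReal.rpow_le_rpow _ hq0.le
                    rw [show ((‖g x‖₊ : ℝ≥0∞)) = ENNReal.ofReal |g x| by
                      rw [← Real.norm_eq_abs, ofReal_norm, enorm_eq_nnnorm]]
                    exact ENNReal.ofReal_le_ofReal (le_of_lt hx)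
                _ ≤ ∫⁻ x, (‖g x‖₊ : ℝ≥0∞) ^ (q:ℝ) ∂μ := setLIntegral_le_lintegral _ _
            calc ENNReal.ofReal a' * μ E ^ (1/q)
                = (ENNReal.ofReal a' ^ (q:ℝ) * μ E) ^ (1/q : ℝ) := by
                  rw [ENNReal.mul_rpow_of_nonneg _ _ (by positivity), ← ENNReal.rpow_mul,
                    mul_one_div, div_self hq0.ne', ENNReal.rpow_one]
              _ ≤ (∫⁻ x, (‖g x‖₊ : ℝ≥0∞) ^ (q:ℝ) ∂μ) ^ (1/q : ℝ) :=
                  ENNReal.rpow_le_rpow hstep (by positivity)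
          have h2 : ENNReal.ofReal a' * μ E ^ (1/q : ℝ) ≠ ⊤ :=
            ENNReal.mul_ne_top ENNReal.ofReal_ne_top
              (ENNReal.rpow_ne_top_of_nonneg (by positivity) hEfin)
          calc a' * (μ E).toReal ^ (1/q)
              = (ENNReal.ofReal a' * μ E ^ (1/q : ℝ)).toReal := by
                rw [ENNReal.toReal_mul, ENNReal.toReal_ofReal ha'0, ← ENNReal.toReal_rpow]
            _ ≤ (eLpNorm g (ENNReal.ofReal q) μ).toReal := ENNReal.toReal_mono
                (by
                  have := h_up q hq
                  exact ne_top_of_le_ne_top (ENNReal.mul_ne_top hStop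
                    (ENNReal.rpow_ne_top_of_nonneg (by positivity) (measure_ne_top _ _))) this)
                hkey
        have hlow_tendsto : Tendsto (fun q : ℝ => a' * (μ E).toReal ^ (1/q))
            atTop (nhds a') := by
          have := (IIM_rpow_one_div_tendsto hmE).const_mul a'
          simpa using this
        filter_upwards [hlow_tendsto.eventually_const_lt ha1, eventually_ge_atTop (1:ℝ)]
          with q h1 h2
        exact lt_of_lt_of_le h1 (hlow q h2)
    · intro b hb
      filter_upwards [hup_tendsto.eventually_lt_const hb, eventually_ge_atTop (1:ℝ)]
        with q h1 h2
      exact lt_of_le_of_lt (hup_real q h2) h1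

lemma IIM_sq_ofReal (a : ℝ) : ENNReal.ofReal (a * a) = (‖a‖₊ : ℝ≥0∞) ^ (2:ℝ) := by
  have h1 : (‖a‖₊ : ℝ≥0∞) = ENNReal.ofReal |a| := by
    rw [← Real.norm_eq_abs, ofReal_norm, enorm_eq_nnnorm]
  rw [h1, ← abs_mul_abs_self a, ENNReal.ofReal_mul (abs_nonneg a)]
  rw [show (2:ℝ) = ((2:ℕ):ℝ) by norm_num, ENNReal.rpow_natCast]
  ring

set_option maxHeartbeats 2000000 in
/-- **Higher temporal integrability, Theorem 6.2.** Under the model hypotheses,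
the solution `U` of the integral invariant model with initial datum `Ũ₀ ∈ L²(ℝ^d)` (vanishing
a.e. outside `Ω̃(0)`) satisfies, for every `1 ≤ q < ∞`,
`t ↦ ‖U(·,t)‖_{L²(Ω̃(t))} ∈ L^q([0,T])` with `‖·‖_{L^q} ≤ T^{1/q} e^{M_A T/2}‖Ũ₀‖_{L²(Ω̃(0))}`;
moreover it belongs to `L^∞([0,T])` with `ess sup ≤ e^{M_A T/2}‖Ũ₀‖_{L²(Ω̃(0))}`, and the
`L^q([0,T])`-norms converge to the `L^∞([0,T])`-norm as `q → ∞`. Here `M_A = d·L_A`. -/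
theorem IIM_higher_temporal_integrability
    (d : ℕ) (T L_A : ℝ) (hT : 0 < T) (hL : 0 < L_A)
    (A : EuclideanSpace ℝ (Fin d) → ℝ → EuclideanSpace ℝ (Fin d))
    (hAcont : ContinuousOn (fun p : EuclideanSpace ℝ (Fin d) × ℝ => A p.1 p.2)
      (Set.univ ×ˢ Set.Icc (0:ℝ) T))
    (hAdiff : ∀ t ∈ Set.Icc (0:ℝ) T, ContDiff ℝ 1 (fun x => A x t))
    (hAgrad : ∀ (x : EuclideanSpace ℝ (Fin d)), ∀ t ∈ Set.Icc (0:ℝ) T,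
      ‖fderiv ℝ (fun x => A x t) x‖ ≤ L_A)
    (D : ℝ → ℝ → EuclideanSpace ℝ (Fin d) → EuclideanSpace ℝ (Fin d))
    (hDflow : ∀ x : EuclideanSpace ℝ (Fin d), D T T x = x ∧
      ∀ τ ∈ Set.Icc (0:ℝ) T,
        HasDerivWithinAt (fun σ => D T σ x) (A (D T τ x) τ) (Set.Icc (0:ℝ) T) τ)
    (hDinv : ∀ t ∈ Set.Icc (0:ℝ) T,
      (∀ x, D t T (D T t x) = x) ∧ (∀ x, D T t (D t T x) = x))
    (hDdiffeo : ∀ t ∈ Set.Icc (0:ℝ) T, ContDiff ℝ 1 (D t T))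
    (hDjac : ∀ t ∈ Set.Icc (0:ℝ) T, ∀ x : EuclideanSpace ℝ (Fin d),
      Real.exp (-((d : ℝ) * L_A * (T - t))) ≤ |(fderiv ℝ (D t T) x).det| ∧
      |(fderiv ℝ (D t T) x).det| ≤ Real.exp ((d : ℝ) * L_A * (T - t)))
    (Ω : Set (EuclideanSpace ℝ (Fin d))) (hΩopen : IsOpen Ω)
    (hΩbd : Bornology.IsBounded Ω)
    (U₀ : EuclideanSpace ℝ (Fin d) → ℝ) (hU₀ : MemLp U₀ 2 volume)
    (hU₀supp : ∀ᵐ x ∂(volume : Measure (EuclideanSpace ℝ (Fin d))),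
      x ∉ D T 0 '' Ω → U₀ x = 0)
    (U : EuclideanSpace ℝ (Fin d) → ℝ → ℝ)
    (hU : IsSolutionIIM d T D Ω U₀ U) :
    (∀ q : ℝ, 1 ≤ q →
      MemLp (solNorm d T D Ω U) (ENNReal.ofReal q) (volume.restrict (Set.Icc (0:ℝ) T)) ∧
      (eLpNorm (solNorm d T D Ω U) (ENNReal.ofReal q)
          (volume.restrict (Set.Icc (0:ℝ) T))).toReal
        ≤ T ^ (1/q) * Real.exp ((d : ℝ) * L_A * T / 2)
            * (eLpNorm U₀ 2 (volume.restrict (D T 0 '' Ω))).toReal) ∧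
    MemLp (solNorm d T D Ω U) ⊤ (volume.restrict (Set.Icc (0:ℝ) T)) ∧
    (eLpNorm (solNorm d T D Ω U) ⊤ (volume.restrict (Set.Icc (0:ℝ) T))).toReal
      ≤ Real.exp ((d : ℝ) * L_A * T / 2)
          * (eLpNorm U₀ 2 (volume.restrict (D T 0 '' Ω))).toReal ∧
    Filter.Tendsto
      (fun q : ℝ =>
        (eLpNorm (solNorm d T D Ω U) (ENNReal.ofReal q)
          (volume.restrict (Set.Icc (0:ℝ) T))).toReal)
      Filter.atTop
      (nhds ((eLpNorm (solNorm d T D Ω U) ⊤ (volume.restrict (Set.Icc (0:ℝ) T))).toReal)) := by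
  classical
  obtain ⟨hU1, hU2, hU3⟩ := hU
  have h0T : (0:ℝ) ∈ Set.Icc (0:ℝ) T := ⟨le_refl 0, hT.le⟩
  set κ := (d:ℝ) * L_A with hκdef
  have hκ0 : 0 ≤ κ := mul_nonneg (Nat.cast_nonneg d) hL.le
  -- Lipschitz bound on A
  have hAlip : ∀ t ∈ Set.Icc (0:ℝ) T, LipschitzWith L_A.toNNReal (fun x => A x t) := by
    intro t ht
    apply lipschitzWith_of_nnnorm_fderiv_le ((hAdiff t ht).differentiable one_ne_zero)
    intro x
    rw [← NNReal.coe_le_coe, coe_nnnorm, Real.coe_toNNReal _ hL.le]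
    exact hAgrad x t ht
  have hflow2 : ∀ x : EuclideanSpace ℝ (Fin d), ∀ τ ∈ Set.Icc (0:ℝ) T,
      HasDerivWithinAt (fun σ => D T σ x) (A (D T τ x) τ) (Set.Icc (0:ℝ) T) τ :=
    fun x => (hDflow x).2
  -- injectivity of D T t
  have hDTtinj : ∀ t ∈ Set.Icc (0:ℝ) T, Function.Injective (D T t) := by
    intro t ht
    exact Function.LeftInverse.injective (g := D t T) (hDinv t ht).1
  -- nonvanishing determinant of fderiv (D t T)
  have hdet0 : ∀ t ∈ Set.Icc (0:ℝ) T, ∀ x, (fderiv ℝ (D t T) x).det ≠ 0 := by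
    intro t ht x
    have h1 := (hDjac t ht x).1
    have := lt_of_lt_of_le (Real.exp_pos _) h1
    exact abs_pos.1 this
  -- derivative of the inverse map D T t
  have hinv : ∀ t ∈ Set.Icc (0:ℝ) T, ∀ y,
      HasFDerivAt (D T t) (fderiv ℝ (D T t) y) y ∧
      (fderiv ℝ (D T t) y).det * (fderiv ℝ (D t T) (D T t y)).det = 1 :=
    fun t ht y => IIM_aux_inv_deriv (hDdiffeo t ht) (hdet0 t ht)
      (hDinv t ht).2 (hDinv t ht).1 y
  have hDTtcont : ∀ t ∈ Set.Icc (0:ℝ) T, Continuous (D T t) := by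
    intro t ht
    exact Differentiable.continuous (fun y => ((hinv t ht y).1).differentiableAt)
  -- Jacobian bounds for fderiv (D T t)
  have hjac : ∀ t ∈ Set.Icc (0:ℝ) T, ∀ y,
      Real.exp (-(κ*(T-t))) ≤ |(fderiv ℝ (D T t) y).det| ∧
      |(fderiv ℝ (D T t) y).det| ≤ Real.exp (κ*(T-t)) := by
    intro t ht y
    have hmul := (hinv t ht y).2
    have hb := hDjac t ht (D T t y)
    have hbpos : 0 < |(fderiv ℝ (D t T) (D T t y)).det| :=
      lt_of_lt_of_le (Real.exp_pos _) hb.1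
    have habs : |(fderiv ℝ (D T t) y).det| * |(fderiv ℝ (D t T) (D T t y)).det| = 1 := by
      rw [← abs_mul, hmul, abs_one]
    have ha : |(fderiv ℝ (D T t) y).det| = |(fderiv ℝ (D t T) (D T t y)).det|⁻¹ := by
      field_simp at habs ⊢
      linarith [habs]
    constructor
    · rw [ha, Real.exp_neg]
      exact inv_anti₀ hbpos hb.2
    · rw [ha]
      calc |(fderiv ℝ (D t T) (D T t y)).det|⁻¹
          ≤ (Real.exp (-(κ * (T - t))))⁻¹ :=
            inv_anti₀ (Real.exp_pos _) hb.1
        _ = Real.exp (κ * (T - t)) := by rw [← Real.exp_neg, neg_neg]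
  -- Jacobian ratio bound
  have hratio : ∀ s ∈ Set.Icc (0:ℝ) T, ∀ t ∈ Set.Icc (0:ℝ) T, ∀ y,
      |(fderiv ℝ (D T s) y).det| ≤ Real.exp (κ * |s - t|) * |(fderiv ℝ (D T t) y).det| := by
    intro s hs t ht y
    have heq : D t T (D T t y) = y := (hDinv t ht).1 y
    -- Lipschitz bound for the transition map
    have hQlip : LipschitzWith (Real.exp (L_A * |s - t|)).toNNReal
        (fun z => D T s (D t T z)) := by
      apply LipschitzWith.of_dist_le_mul
      intro u v
      have h1 := IIM_aux_flow_dist hT hL hAlip hflow2 (D t T u) (D t T v) hs ht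
      rw [(hDinv t ht).2 u, (hDinv t ht).2 v] at h1
      rwa [Real.coe_toNNReal _ (Real.exp_pos _).le]
    -- derivative of the transition map at D T t y
    have hQd : HasFDerivAt (fun z => D T s (D t T z))
        ((fderiv ℝ (D T s) y).comp (fderiv ℝ (D t T) (D T t y))) (D T t y) := by
      have hin : HasFDerivAt (D t T) (fderiv ℝ (D t T) (D T t y)) (D T t y) :=
        ((((hDdiffeo t ht).differentiable one_ne_zero)) _).hasFDerivAt
      have hout : HasFDerivAt (D T s) (fderiv ℝ (D T s) y) (D t T (D T t y)) := by
        rw [heq]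
        exact (hinv s hs y).1
      exact hout.comp _ hin
    -- chain rule for D T s through D T t
    have hcompfun : ((fun z => D T s (D t T z)) ∘ (D T t)) = D T s := by
      funext z
      simp only [Function.comp_apply]
      rw [(hDinv t ht).1 z]
    have hDs' : HasFDerivAt (D T s)
        (((fderiv ℝ (D T s) y).comp (fderiv ℝ (D t T) (D T t y))).comp
          (fderiv ℝ (D T t) y)) y := by
      have hcomp := hQd.comp y ((hinv t ht y).1)
      rwa [hcompfun] at hcomp
    have huniq : fderiv ℝ (D T s) y
        = ((fderiv ℝ (D T s) y).comp (fderiv ℝ (D t T) (D T t y))).comp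
          (fderiv ℝ (D T t) y) := ((hinv s hs y).1).unique hDs'
    -- operator norm bound on the transition derivative
    have hMQ : ‖(fderiv ℝ (D T s) y).comp (fderiv ℝ (D t T) (D T t y))‖
        ≤ Real.exp (L_A * |s - t|) := by
      have h2 := hQd.le_of_lipschitz hQlip
      rwa [Real.coe_toNNReal _ (Real.exp_pos _).le] at h2
    have hdetMQ : |((fderiv ℝ (D T s) y).comp (fderiv ℝ (D t T) (D T t y))).det|
        ≤ Real.exp (κ * |s - t|) := by
      have h2 := IIM_aux_det_le_pow _ (Real.exp_pos (L_A * |s - t|)).le hMQ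
      calc |((fderiv ℝ (D T s) y).comp (fderiv ℝ (D t T) (D T t y))).det|
          ≤ Real.exp (L_A * |s - t|) ^ d := h2
        _ = Real.exp (κ * |s - t|) := by
            rw [← Real.exp_nat_mul, hκdef]
            ring_nf
    calc |(fderiv ℝ (D T s) y).det|
        = |(((fderiv ℝ (D T s) y).comp (fderiv ℝ (D t T) (D T t y))).comp
            (fderiv ℝ (D T t) y)).det| := by rw [← huniq]
      _ = |((fderiv ℝ (D T s) y).comp (fderiv ℝ (D t T) (D T t y))).det|
            * |(fderiv ℝ (D T t) y).det| := by
          simp only [ContinuousLinearMap.det, ContinuousLinearMap.coe_comp,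
            LinearMap.det_comp, abs_mul]
          exact (congrArg abs (LinearMap.det_comp _ _)).trans (abs_mul _ _)
      _ ≤ Real.exp (κ * |s - t|) * |(fderiv ℝ (D T t) y).det| :=
          mul_le_mul_of_nonneg_right hdetMQ (abs_nonneg _)
  -- the moving domain
  have hΩteq : ∀ t ∈ Set.Icc (0:ℝ) T, D T t '' Ω = (D t T) ⁻¹' Ω := by
    intro t ht
    ext x
    constructor
    · rintro ⟨y, hy, rfl⟩
      rw [Set.mem_preimage, (hDinv t ht).1 y]
      exact hy
    · intro hx
      exact ⟨D t T x, hx, (hDinv t ht).2 x⟩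
  have hΩtmeas : ∀ t ∈ Set.Icc (0:ℝ) T, MeasurableSet (D T t '' Ω) := by
    intro t ht
    rw [hΩteq t ht]
    exact (hΩopen.preimage ((hDdiffeo t ht).continuous)).measurableSet
  -- change of variables
  have hCOV : ∀ t ∈ Set.Icc (0:ℝ) T, ∀ G : EuclideanSpace ℝ (Fin d) → ℝ≥0∞,
      ∫⁻ x in D T t '' Ω, G x
        = ∫⁻ y in Ω, ENNReal.ofReal |(fderiv ℝ (D T t) y).det| * G (D T t y) := by
    intro t ht G
    exact lintegral_image_eq_lintegral_abs_det_fderiv_mul volume hΩopen.measurableSet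
      (fun y _ => ((hinv t ht y).1).hasFDerivWithinAt) ((hDTtinj t ht).injOn) G
  -- squared L² mass
  set n : ℝ → ℝ≥0∞ := fun t => ∫⁻ x in D T t '' Ω, (‖U x t‖₊ : ℝ≥0∞) ^ (2:ℝ) with hn_def
  have hsol : ∀ t, eLpNorm (fun x => U x t) 2 (volume.restrict (D T t '' Ω))
      = (n t) ^ (1/2 : ℝ) := by
    intro t
    rw [eLpNorm_eq_lintegral_rpow_enorm_toReal (by norm_num) (by norm_num)]
    norm_num [hn_def, enorm_eq_nnnorm]
  have hnfin : ∀ t ∈ Set.Icc (0:ℝ) T, n t ≠ ⊤ := by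
    intro t ht
    intro htop
    have h1 := (hU1 t ht).2
    rw [hsol t, htop] at h1
    simp [ENNReal.top_rpow_of_pos] at h1
  have hsolval : ∀ t, solNorm d T D Ω U t = ((n t).toReal) ^ (1/2:ℝ) := by
    intro t
    rw [solNorm, hsol t, ← ENNReal.toReal_rpow]
  -- ===== KEY estimate =====
  have hkey : ∀ t ∈ Set.Icc (0:ℝ) T, ∀ s ∈ Set.Icc (0:ℝ) T,
      n t ≤ ENNReal.ofReal (Real.exp (κ * |t - s|)) * n s := by
    intro t ht s hs
    obtain ⟨w, hw, hweq⟩ : ∃ w, StronglyMeasurable w ∧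
        (fun x => U x t) =ᵐ[volume.restrict (D T t '' Ω)] w :=
      ⟨(hU1 t ht).aestronglyMeasurable.mk _,
        (hU1 t ht).aestronglyMeasurable.stronglyMeasurable_mk,
        (hU1 t ht).aestronglyMeasurable.ae_eq_mk⟩
    set Ψ : EuclideanSpace ℝ (Fin d) → ℝ := Ω.indicator (fun y => w (D T t y)) with hΨ_def
    have hΨmeas : StronglyMeasurable Ψ :=
      ((hw.measurable.comp (hDTtcont t ht).measurable).stronglyMeasurable).indicator
        hΩopen.measurableSet
    have hΨsq : (fun y => (‖Ψ y‖₊ : ℝ≥0∞) ^ (2:ℝ))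
        = Ω.indicator (fun y => (‖w (D T t y)‖₊ : ℝ≥0∞) ^ (2:ℝ)) := by
      funext y
      by_cases hy : y ∈ Ω
      · rw [Set.indicator_of_mem hy, hΨ_def, Set.indicator_of_mem hy]
      · rw [Set.indicator_of_notMem hy, hΨ_def, Set.indicator_of_notMem hy]
        simp [ENNReal.zero_rpow_of_pos]
    have hnt : n t = ∫⁻ y in Ω, ENNReal.ofReal |(fderiv ℝ (D T t) y).det|
        * (‖w (D T t y)‖₊ : ℝ≥0∞) ^ (2:ℝ) := by
      have h1 : n t = ∫⁻ x in D T t '' Ω, (‖w x‖₊ : ℝ≥0∞) ^ (2:ℝ) := by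
        rw [hn_def]
        apply lintegral_congr_ae
        filter_upwards [hweq] with x hx
        rw [hx]
      rw [h1, hCOV t ht]
    have hexp1 : ∀ θ : ℝ, Real.exp θ * Real.exp (-θ) = 1 := by
      intro θ
      rw [← Real.exp_add, add_neg_cancel, Real.exp_zero]
    have hwint : ∫⁻ y in Ω, (‖w (D T t y)‖₊ : ℝ≥0∞) ^ (2:ℝ)
        ≤ ENNReal.ofReal (Real.exp (κ * (T - t))) * n t := by
      rw [hnt, ← lintegral_const_mul' _ _ ENNReal.ofReal_ne_top]
      apply lintegral_mono
      intro y
      have hj := (hjac t ht y).1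
      calc (‖w (D T t y)‖₊ : ℝ≥0∞) ^ (2:ℝ)
          = 1 * (‖w (D T t y)‖₊ : ℝ≥0∞) ^ (2:ℝ) := (one_mul _).symm
        _ ≤ (ENNReal.ofReal (Real.exp (κ * (T - t)))
              * ENNReal.ofReal |(fderiv ℝ (D T t) y).det|)
              * (‖w (D T t y)‖₊ : ℝ≥0∞) ^ (2:ℝ) := by
            apply mul_le_mul_left
            rw [← ENNReal.ofReal_mul (Real.exp_pos _).le, ← ENNReal.ofReal_one]
            apply ENNReal.ofReal_le_ofReal
            calc (1:ℝ) = Real.exp (κ * (T - t)) * Real.exp (-(κ * (T - t))) :=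
                  (hexp1 _).symm
              _ ≤ Real.exp (κ * (T - t)) * |(fderiv ℝ (D T t) y).det| :=
                  mul_le_mul_of_nonneg_left hj (Real.exp_pos _).le
        _ = ENNReal.ofReal (Real.exp (κ * (T - t)))
              * (ENNReal.ofReal |(fderiv ℝ (D T t) y).det|
                * (‖w (D T t y)‖₊ : ℝ≥0∞) ^ (2:ℝ)) := by rw [mul_assoc]
    have hΨL2 : MemLp Ψ 2 volume := by
      refine ⟨hΨmeas.aestronglyMeasurable, ?_⟩
      rw [eLpNorm_eq_lintegral_rpow_enorm_toReal (by norm_num) (by norm_num)]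
      simp only [enorm_eq_nnnorm]
      apply ENNReal.rpow_lt_top_of_nonneg (by norm_num)
      have h2 : ∫⁻ y, (‖Ψ y‖₊ : ℝ≥0∞) ^ (2:ℝ)
          = ∫⁻ y in Ω, (‖w (D T t y)‖₊ : ℝ≥0∞) ^ (2:ℝ) := by
        rw [lintegral_congr (fun y => congrFun hΨsq y),
          lintegral_indicator hΩopen.measurableSet]
      have h3 : (ENNReal.toReal 2) = (2:ℝ) := by norm_num
      rw [h3, h2]
      exact (lt_of_le_of_lt hwint (ENNReal.mul_lt_top ENNReal.ofReal_lt_top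
        (lt_top_iff_ne_top.2 (hnfin t ht)))).ne
    have hΨsupp : ∀ᵐ x ∂(volume : Measure (EuclideanSpace ℝ (Fin d))),
        x ∉ Ω → Ψ x = 0 :=
      Filter.Eventually.of_forall fun x hx => Set.indicator_of_notMem hx _
    have hid : ∫ x in D T t '' Ω, U x t * Ψ (D t T x)
        = ∫ x in D T s '' Ω, U x s * Ψ (D s T x) :=
      (hU3 Ψ hΨL2 hΨsupp t ht).trans (hU3 Ψ hΨL2 hΨsupp s hs).symm
    have hΨval : ∀ x ∈ D T t '' Ω, Ψ (D t T x) = w x := by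
      rintro x ⟨y, hy, rfl⟩
      rw [(hDinv t ht).1 y, hΨ_def]
      exact Set.indicator_of_mem hy _
    have hLHS : ∫ x in D T t '' Ω, U x t * Ψ (D t T x) = (n t).toReal := by
      have h1 : ∫ x in D T t '' Ω, U x t * Ψ (D t T x)
          = ∫ x in D T t '' Ω, U x t * U x t := by
        apply integral_congr_ae
        filter_upwards [ae_restrict_mem (hΩtmeas t ht), hweq] with x hx1 hx2
        rw [hΨval x hx1, ← hx2]
      rw [h1, integral_eq_lintegral_of_nonneg_ae
        (Filter.Eventually.of_forall fun x => mul_self_nonneg _)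
        ((hU1 t ht).aestronglyMeasurable.mul (hU1 t ht).aestronglyMeasurable)]
      congr 1
      rw [hn_def]
      exact lintegral_congr fun x => IIM_sq_ofReal (U x t)
    set B := ∫⁻ x in D T s '' Ω, (‖Ψ (D s T x)‖₊ : ℝ≥0∞) ^ (2:ℝ) with hB_def
    have hBfin : B ≠ ⊤ := by
      rw [hB_def, hCOV s hs]
      have hle : ∫⁻ y in Ω, ENNReal.ofReal |(fderiv ℝ (D T s) y).det|
            * (‖Ψ (D s T (D T s y))‖₊ : ℝ≥0∞) ^ (2:ℝ)
          ≤ ∫⁻ y in Ω, ENNReal.ofReal (Real.exp (κ * (T - s)))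
            * (‖w (D T t y)‖₊ : ℝ≥0∞) ^ (2:ℝ) := by
        apply setLIntegral_mono' hΩopen.measurableSet
        intro y hy
        rw [(hDinv s hs).1 y, hΨ_def, Set.indicator_of_mem hy]
        exact mul_le_mul_left (ENNReal.ofReal_le_ofReal (hjac s hs y).2) _
      apply ne_top_of_le_ne_top _ hle
      rw [lintegral_const_mul' _ _ ENNReal.ofReal_ne_top]
      exact (ENNReal.mul_lt_top ENNReal.ofReal_lt_top
        (lt_of_le_of_lt hwint (ENNReal.mul_lt_top ENNReal.ofReal_lt_top
          (lt_top_iff_ne_top.2 (hnfin t ht))))).ne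
    have hRHS : ∫ x in D T s '' Ω, U x s * Ψ (D s T x)
        ≤ ((n s) ^ (1/2:ℝ) * B ^ (1/2:ℝ)).toReal := by
      have hnorm : ‖∫ x in D T s '' Ω, U x s * Ψ (D s T x)‖
          ≤ (∫⁻ x in D T s '' Ω,
              ENNReal.ofReal ‖U x s * Ψ (D s T x)‖).toReal :=
        norm_integral_le_lintegral_norm _
      have hps : ∫⁻ x in D T s '' Ω, ENNReal.ofReal ‖U x s * Ψ (D s T x)‖
          = ∫⁻ x in D T s '' Ω,
              ((fun x => (‖U x s‖₊ : ℝ≥0∞)) * fun x => (‖Ψ (D s T x)‖₊ : ℝ≥0∞)) x := by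
        apply lintegral_congr
        intro x
        rw [ofReal_norm, enorm_eq_nnnorm, nnnorm_mul, ENNReal.coe_mul]
        rfl
      have hconj : Real.HolderConjugate 2 2 := by
        exact Real.HolderConjugate.two_two
      have hfA : AEMeasurable (fun x => (‖U x s‖₊ : ℝ≥0∞))
          (volume.restrict (D T s '' Ω)) := (hU1 s hs).aestronglyMeasurable.enorm
      have hgA : AEMeasurable (fun x => (‖Ψ (D s T x)‖₊ : ℝ≥0∞))
          (volume.restrict (D T s '' Ω)) := by
        apply Measurable.aemeasurable
        exact (hΨmeas.measurable.comp
          ((hDdiffeo s hs).continuous.measurable)).nnnorm.coe_nnreal_ennreal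
      have hH := ENNReal.lintegral_mul_le_Lp_mul_Lq
        (volume.restrict (D T s '' Ω)) hconj hfA hgA
      calc ∫ x in D T s '' Ω, U x s * Ψ (D s T x)
          ≤ ‖∫ x in D T s '' Ω, U x s * Ψ (D s T x)‖ := le_abs_self _
        _ ≤ (∫⁻ x in D T s '' Ω, ENNReal.ofReal ‖U x s * Ψ (D s T x)‖).toReal := hnorm
        _ ≤ ((n s) ^ (1/2:ℝ) * B ^ (1/2:ℝ)).toReal := by
            apply ENNReal.toReal_mono
            · exact ENNReal.mul_ne_top
                (ENNReal.rpow_ne_top_of_nonneg (by norm_num) (hnfin s hs))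
                (ENNReal.rpow_ne_top_of_nonneg (by norm_num) hBfin)
            · rw [hps]
              exact hH
    have hBle : B ≤ ENNReal.ofReal (Real.exp (κ * |t - s|)) * n t := by
      rw [hB_def, hCOV s hs]
      have h1 : ∫⁻ y in Ω, ENNReal.ofReal |(fderiv ℝ (D T s) y).det|
            * (‖Ψ (D s T (D T s y))‖₊ : ℝ≥0∞) ^ (2:ℝ)
          ≤ ∫⁻ y in Ω, ENNReal.ofReal (Real.exp (κ * |t - s|))
            * (ENNReal.ofReal |(fderiv ℝ (D T t) y).det|
              * (‖w (D T t y)‖₊ : ℝ≥0∞) ^ (2:ℝ)) := by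
        apply setLIntegral_mono' hΩopen.measurableSet
        intro y hy
        rw [(hDinv s hs).1 y, hΨ_def, Set.indicator_of_mem hy, ← mul_assoc]
        apply mul_le_mul_left
        rw [← ENNReal.ofReal_mul (Real.exp_pos _).le]
        apply ENNReal.ofReal_le_ofReal
        have := hratio s hs t ht y
        rwa [abs_sub_comm s t] at this
      apply le_trans h1
      rw [lintegral_const_mul' _ _ ENNReal.ofReal_ne_top, ← hnt]
    -- combine everything
    have hmain : (n t).toReal ≤ ((n s) ^ (1/2:ℝ)).toReal
        * ((ENNReal.ofReal (Real.exp (κ * |t - s|)) * n t) ^ (1/2:ℝ)).toReal := by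
      have h1 : (n t).toReal ≤ ((n s) ^ (1/2:ℝ) * B ^ (1/2:ℝ)).toReal := by
        rw [← hLHS, hid]
        exact hRHS
      have h2 : (n s) ^ (1/2:ℝ) * B ^ (1/2:ℝ)
          ≤ (n s) ^ (1/2:ℝ) * (ENNReal.ofReal (Real.exp (κ * |t - s|)) * n t) ^ (1/2:ℝ) :=
        mul_le_mul_right (ENNReal.rpow_le_rpow hBle (by norm_num)) _
      have h3 : (n s) ^ (1/2:ℝ) * (ENNReal.ofReal (Real.exp (κ * |t - s|)) * n t) ^ (1/2:ℝ) ≠ ⊤ :=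
        ENNReal.mul_ne_top
          (ENNReal.rpow_ne_top_of_nonneg (by norm_num) (hnfin s hs))
          (ENNReal.rpow_ne_top_of_nonneg (by norm_num)
            (ENNReal.mul_ne_top ENNReal.ofReal_ne_top (hnfin t ht)))
      calc (n t).toReal ≤ ((n s) ^ (1/2:ℝ) * B ^ (1/2:ℝ)).toReal := h1
        _ ≤ ((n s) ^ (1/2:ℝ)
            * (ENNReal.ofReal (Real.exp (κ * |t - s|)) * n t) ^ (1/2:ℝ)).toReal :=
          ENNReal.toReal_mono h3 h2
        _ = ((n s) ^ (1/2:ℝ)).toReal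
            * ((ENNReal.ofReal (Real.exp (κ * |t - s|)) * n t) ^ (1/2:ℝ)).toReal :=
          ENNReal.toReal_mul
    -- real arithmetic
    set x := (n t).toReal with hx_def
    set y := (n s).toReal with hy_def
    set b := Real.exp (κ * |t - s|) with hb_def
    have hb0 : 0 < b := Real.exp_pos _
    have hx0 : 0 ≤ x := ENNReal.toReal_nonneg
    have hy0 : 0 ≤ y := ENNReal.toReal_nonneg
    have hxb : x ≤ y ^ (1/2:ℝ) * (b * x) ^ (1/2:ℝ) := by
      have h4 : ((ENNReal.ofReal b * n t) ^ (1/2:ℝ)).toReal = (b * x) ^ (1/2:ℝ) := by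
        rw [← ENNReal.toReal_rpow, ENNReal.toReal_mul, ENNReal.toReal_ofReal hb0.le]
      have h5 : ((n s) ^ (1/2:ℝ)).toReal = y ^ (1/2:ℝ) := by
        rw [← ENNReal.toReal_rpow]
      rw [← h4, ← h5]
      exact hmain
    have hxby : x ≤ b * y := by
      rcases eq_or_lt_of_le hx0 with h | h
      · rw [← h]
        positivity
      · have hsq : x * x ≤ y * (b * x) := by
          have h6 : y ^ (1/2:ℝ) * (b * x) ^ (1/2:ℝ) * (y ^ (1/2:ℝ) * (b * x) ^ (1/2:ℝ))
              = y * (b * x) := by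
            have hyy : y ^ (1/2:ℝ) * y ^ (1/2:ℝ) = y := by
              rw [← Real.rpow_add' hy0 (by norm_num)]
              norm_num
            have hbb : (b * x) ^ (1/2:ℝ) * (b * x) ^ (1/2:ℝ) = b * x := by
              rw [← Real.rpow_add' (by positivity) (by norm_num)]
              norm_num
            calc y ^ (1/2:ℝ) * (b * x) ^ (1/2:ℝ) * (y ^ (1/2:ℝ) * (b * x) ^ (1/2:ℝ))
                = (y ^ (1/2:ℝ) * y ^ (1/2:ℝ)) * ((b * x) ^ (1/2:ℝ) * (b * x) ^ (1/2:ℝ)) := by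
                  ring
              _ = y * (b * x) := by rw [hyy, hbb]
          calc x * x ≤ (y ^ (1/2:ℝ) * (b * x) ^ (1/2:ℝ))
                * (y ^ (1/2:ℝ) * (b * x) ^ (1/2:ℝ)) :=
              mul_le_mul hxb hxb hx0 (by positivity)
            _ = y * (b * x) := h6
        have h7 : x * x ≤ (b * y) * x := by nlinarith
        exact (mul_le_mul_iff_left₀ h).1 h7
    calc n t = ENNReal.ofReal x := (ENNReal.ofReal_toReal (hnfin t ht)).symm
      _ ≤ ENNReal.ofReal (b * y) := ENNReal.ofReal_le_ofReal hxby
      _ = ENNReal.ofReal b * ENNReal.ofReal y := ENNReal.ofReal_mul hb0.le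
      _ = ENNReal.ofReal (Real.exp (κ * |t - s|)) * n s := by
          rw [hy_def, ENNReal.ofReal_toReal (hnfin s hs), hb_def]
  -- real-valued version
  have hNle : ∀ t ∈ Set.Icc (0:ℝ) T, ∀ s ∈ Set.Icc (0:ℝ) T,
      solNorm d T D Ω U t ≤ Real.exp (κ * |t - s| / 2) * solNorm d T D Ω U s := by
    intro t ht s hs
    rw [hsolval t, hsolval s]
    have h1 := hkey t ht s hs
    have h2 : (n t).toReal ≤ Real.exp (κ * |t - s|) * (n s).toReal := by
      calc (n t).toReal ≤ (ENNReal.ofReal (Real.exp (κ * |t - s|)) * n s).toReal :=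
            ENNReal.toReal_mono
              (ENNReal.mul_ne_top ENNReal.ofReal_ne_top (hnfin s hs)) h1
        _ = Real.exp (κ * |t - s|) * (n s).toReal := by
            rw [ENNReal.toReal_mul, ENNReal.toReal_ofReal (Real.exp_pos _).le]
    calc ((n t).toReal) ^ (1/2:ℝ)
        ≤ (Real.exp (κ * |t - s|) * (n s).toReal) ^ (1/2:ℝ) := by
          apply Real.rpow_le_rpow ENNReal.toReal_nonneg h2 (by norm_num)
      _ = Real.exp (κ * |t - s| / 2) * ((n s).toReal) ^ (1/2:ℝ) := by
          rw [Real.mul_rpow (Real.exp_pos _).le ENNReal.toReal_nonneg]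
          congr 1
          rw [← Real.exp_mul]
          ring_nf
  -- value at 0
  have hn0 : eLpNorm (fun x => U x 0) 2 (volume.restrict (D T 0 '' Ω))
      = eLpNorm U₀ 2 (volume.restrict (D T 0 '' Ω)) := eLpNorm_congr_ae hU2
  have hc0 : solNorm d T D Ω U 0 = (eLpNorm U₀ 2 (volume.restrict (D T 0 '' Ω))).toReal := by
    rw [solNorm, hn0]
  -- uniform bound
  have hbound : ∀ t ∈ Set.Icc (0:ℝ) T,
      solNorm d T D Ω U t ≤ Real.exp (κ * T / 2)
        * (eLpNorm U₀ 2 (volume.restrict (D T 0 '' Ω))).toReal := by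
    intro t ht
    have h1 := hNle t ht 0 h0T
    rw [hc0] at h1
    refine h1.trans (mul_le_mul_of_nonneg_right ?_ ENNReal.toReal_nonneg)
    apply Real.exp_le_exp.2
    have : |t - 0| = t := by rw [sub_zero, abs_of_nonneg ht.1]
    rw [this]
    have := ht.2
    nlinarith [ht.1]
  -- continuity of solNorm on the time interval
  have hcont : ContinuousOn (solNorm d T D Ω U) (Set.Icc (0:ℝ) T) := by
    intro s hs
    have hN0 : ∀ r, 0 ≤ solNorm d T D Ω U r := by
      intro r
      simp only [solNorm]
      exact ENNReal.toReal_nonneg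
    rw [Metric.continuousWithinAt_iff]
    intro ε hε
    have hFc : ContinuousAt
        (fun r : ℝ => (Real.exp (κ * r) - 1) * (solNorm d T D Ω U s + 1)) 0 := by
      apply Continuous.continuousAt
      exact ((Real.continuous_exp.comp (continuous_const.mul continuous_id)).sub
        continuous_const).mul continuous_const
    obtain ⟨δ, hδ0, hδ⟩ := Metric.continuousAt_iff.1 hFc ε hε
    refine ⟨δ, hδ0, ?_⟩
    intro t ht hts
    have h1 := hNle t ht s hs
    have h2 := hNle s hs t ht
    rw [abs_sub_comm s t] at h2
    set Nt := solNorm d T D Ω U t with hNt_def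
    set Ns := solNorm d T D Ω U s with hNs_def
    set E := Real.exp (κ * |t - s| / 2) with hE_def
    have hE1 : 1 ≤ E := Real.one_le_exp (by positivity)
    have hEE : E * E = Real.exp (κ * |t - s|) := by
      rw [hE_def, ← Real.exp_add]
      ring_nf
    have hNt0 : 0 ≤ Nt := hN0 t
    have hNs0 : 0 ≤ Ns := hN0 s
    have habs : |Nt - Ns| ≤ (Real.exp (κ * |t - s|) - 1) * (Ns + 1) := by
      rw [← hEE, abs_sub_le_iff]
      constructor
      · nlinarith
      · nlinarith
    rw [Real.dist_eq]
    apply lt_of_le_of_lt habs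
    have hd2 : dist (|t - s|) (0:ℝ) < δ := by
      rw [Real.dist_eq, sub_zero, abs_abs]
      rw [Real.dist_eq] at hts
      exact hts
    have := hδ hd2
    rw [Real.dist_eq] at this
    simp only [Real.exp_zero, mul_zero, sub_self, zero_mul, sub_zero] at this
    have hnn : 0 ≤ (Real.exp (κ * |t - s|) - 1) * (Ns + 1) := by
      have : 1 ≤ Real.exp (κ * |t - s|) := Real.one_le_exp (by positivity)
      nlinarith [hN0 s]
    calc (Real.exp (κ * |t - s|) - 1) * (Ns + 1)
        = |(Real.exp (κ * |t - s|) - 1) * (Ns + 1)| := (abs_of_nonneg hnn).symm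
      _ < ε := this
  -- assemble
  have hμfin : IsFiniteMeasure (volume.restrict (Set.Icc (0:ℝ) T)) := by
    constructor
    rw [Measure.restrict_apply_univ, Real.volume_Icc]
    exact ENNReal.ofReal_lt_top
  haveI := hμfin
  have hC0 : 0 ≤ Real.exp (κ * T / 2)
      * (eLpNorm U₀ 2 (volume.restrict (D T 0 '' Ω))).toReal :=
    mul_nonneg (Real.exp_pos _).le ENNReal.toReal_nonneg
  have hmeasN : AEStronglyMeasurable (solNorm d T D Ω U)
      (volume.restrict (Set.Icc (0:ℝ) T)) :=
    (hcont.aemeasurable measurableSet_Icc).aestronglyMeasurable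
  have hae : ∀ᵐ r ∂(volume.restrict (Set.Icc (0:ℝ) T)), ‖solNorm d T D Ω U r‖
      ≤ Real.exp (κ * T / 2) * (eLpNorm U₀ 2 (volume.restrict (D T 0 '' Ω))).toReal := by
    rw [ae_restrict_iff' measurableSet_Icc]
    apply Filter.Eventually.of_forall
    intro r hr
    have hnn : 0 ≤ solNorm d T D Ω U r := by
      simp only [solNorm]
      exact ENNReal.toReal_nonneg
    rw [Real.norm_eq_abs, abs_of_nonneg hnn]
    exact hbound r hr
  have hμuniv : (volume.restrict (Set.Icc (0:ℝ) T)) Set.univ = ENNReal.ofReal T := by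
    rw [Measure.restrict_apply_univ, Real.volume_Icc, sub_zero]
  have hgoalC : κ * T / 2 = (d:ℝ) * L_A * T / 2 := by rw [hκdef]
  refine ⟨?_, ?_, ?_, ?_⟩
  · intro q hq
    have hq0 : 0 < q := lt_of_lt_of_le zero_lt_one hq
    have hb := eLpNorm_le_of_ae_bound (p := ENNReal.ofReal q) hae
    rw [hμuniv, ENNReal.toReal_ofReal hq0.le] at hb
    have hrhs_ne : ENNReal.ofReal T ^ (q⁻¹)
        * ENNReal.ofReal (Real.exp (κ * T / 2)
          * (eLpNorm U₀ 2 (volume.restrict (D T 0 '' Ω))).toReal) ≠ ⊤ :=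
      ENNReal.mul_ne_top
        (ENNReal.rpow_ne_top_of_nonneg (by positivity) ENNReal.ofReal_ne_top)
        ENNReal.ofReal_ne_top
    constructor
    · exact ⟨hmeasN, lt_of_le_of_lt hb (lt_top_iff_ne_top.2 hrhs_ne)⟩
    · calc (eLpNorm (solNorm d T D Ω U) (ENNReal.ofReal q)
            (volume.restrict (Set.Icc (0:ℝ) T))).toReal
          ≤ (ENNReal.ofReal T ^ (q⁻¹)
            * ENNReal.ofReal (Real.exp (κ * T / 2)
              * (eLpNorm U₀ 2 (volume.restrict (D T 0 '' Ω))).toReal)).toReal :=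
          ENNReal.toReal_mono hrhs_ne hb
        _ = T ^ (1/q) * (Real.exp (κ * T / 2)
            * (eLpNorm U₀ 2 (volume.restrict (D T 0 '' Ω))).toReal) := by
          rw [ENNReal.toReal_mul, ← ENNReal.toReal_rpow,
            ENNReal.toReal_ofReal hT.le, ENNReal.toReal_ofReal hC0, one_div]
        _ = T ^ (1/q) * Real.exp ((d:ℝ) * L_A * T / 2)
            * (eLpNorm U₀ 2 (volume.restrict (D T 0 '' Ω))).toReal := by
          rw [← hgoalC]
          ring
  · refine ⟨hmeasN, ?_⟩
    rw [eLpNorm_exponent_top]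
    exact lt_of_le_of_lt (eLpNormEssSup_le_of_ae_bound hae) ENNReal.ofReal_lt_top
  · rw [eLpNorm_exponent_top]
    calc (eLpNormEssSup (solNorm d T D Ω U) (volume.restrict (Set.Icc (0:ℝ) T))).toReal
        ≤ (ENNReal.ofReal (Real.exp (κ * T / 2)
            * (eLpNorm U₀ 2 (volume.restrict (D T 0 '' Ω))).toReal)).toReal :=
        ENNReal.toReal_mono ENNReal.ofReal_ne_top (eLpNormEssSup_le_of_ae_bound hae)
      _ = Real.exp (κ * T / 2)
            * (eLpNorm U₀ 2 (volume.restrict (D T 0 '' Ω))).toReal :=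
        ENNReal.toReal_ofReal hC0
      _ = Real.exp ((d:ℝ) * L_A * T / 2)
            * (eLpNorm U₀ 2 (volume.restrict (D T 0 '' Ω))).toReal := by rw [hgoalC]
  · exact IIM_aux_tendsto _ _ hmeasN hae


end IIMAux
end
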